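/- Let m be an even positive integer and let g be a bent function on F_{2^{m−1}} × F_2. For ε ∈ F_2 and λ ∈ F_{2^{m−1}} set W_{g(·,ε)}(λ) = Σ_{x ∈ F_{2^{m−1}}} (−1)^{g(x,ε) + Tr^{m−1}_1(λ x)}. Then for every λ ∈ F_{2^{m−1}}, { |W_{g(·,0)}(λ)|, |W_{g(·,1)}(λ)| } = { 0, 2^{m/2} }; that is, one of the two values is 0 and the other has absolute value 2^{m/2}. -/
import Mathlib


open Finset

noncomputable section

abbrev Fq (n : ℕ) := GaloisField 2 n

noncomputable instance (n : ℕ) : Fintype (Fq n) := Fintype.ofFinite _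

/-- Absolute trace from `F_{2^n}` to `F_2`. -/
noncomputable def tr1 (n : ℕ) (x : Fq n) : ZMod 2 :=
  Algebra.trace (ZMod 2) (Fq n) x

/-- `(-1)^x` for `x : F_2`, as an integer. -/
def chi (x : ZMod 2) : ℤ := (-1 : ℤ) ^ x.val

/-- Walsh transform of a Boolean function on `F_{2^n} × F_2`. -/
noncomputable def walsh (n : ℕ) (f : Fq n × ZMod 2 → ZMod 2)
    (lam : Fq n) (nu : ZMod 2) : ℤ :=
  ∑ x : Fq n × ZMod 2, chi (f x + tr1 n (lam * x.1) + nu * x.2)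

/-- A Boolean function on `F_{2^{m-1}} × F_2` is bent if all its Walsh coefficients
are `± 2^(m/2)`. -/
def IsBent (m : ℕ) (f : Fq (m - 1) × ZMod 2 → ZMod 2) : Prop :=
  ∀ lam nu, walsh (m - 1) f lam nu = 2 ^ (m / 2) ∨ walsh (m - 1) f lam nu = -(2 ^ (m / 2))

/-- Cyclic bent function on `F_{2^{m-1}} × F_2`. -/
def IsCyclicBent (m : ℕ) (f : Fq (m - 1) × ZMod 2 → ZMod 2) : Prop :=
  ∀ a b : Fq (m - 1), a ≠ b → ∀ ε : ZMod 2,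
    IsBent m fun x => f (a * x.1, x.2) + f (b * x.1, x.2 + ε)

noncomputable instance (n : ℕ) : DecidableEq (Fq n) := Classical.decEq _

/-- Walsh transform of a Boolean function on `F_{2^n}`. -/
noncomputable def walsh1 (n : ℕ) (g : Fq n → ZMod 2) (lam : Fq n) : ℤ :=
  ∑ x : Fq n, chi (g x + tr1 n (lam * x))


lemma chi_add (a b : ZMod 2) : chi (a + b) = chi a * chi b := by
  revert a b; decide

lemma walsh_eq (n : ℕ) (g : Fq n × ZMod 2 → ZMod 2) (lam : Fq n) (nu : ZMod 2) :
    walsh n g lam nu =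
      walsh1 n (fun x => g (x, 0)) lam + chi nu * walsh1 n (fun x => g (x, 1)) lam := by
  unfold walsh walsh1
  rw [Fintype.sum_prod_type, Finset.mul_sum, ← Finset.sum_add_distrib]
  refine Finset.sum_congr rfl fun x _ => ?_
  have h2 : ∀ f : ZMod 2 → ℤ, (∑ y : ZMod 2, f y) = f 0 + f 1 := fun f => Fin.sum_univ_two f
  rw [h2]
  simp only [mul_zero, add_zero, mul_one]
  rw [chi_add (g (x, 1) + tr1 n (lam * x)) nu]
  ring

/-- if `g` is bent on `F_{2^{m-1}} × F_2` then, at each `λ`, one of the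
restricted Walsh values `W_{g(·,0)}(λ)`, `W_{g(·,1)}(λ)` vanishes and the other has
absolute value `2^{m/2}`. -/
theorem stmt17 (m : ℕ) (hm : Even m) (hm0 : 0 < m)
    (g : Fq (m - 1) × ZMod 2 → ZMod 2) (hg : IsBent m g)
    (lam : Fq (m - 1)) :
    ({|walsh1 (m - 1) (fun x => g (x, 0)) lam|,
      |walsh1 (m - 1) (fun x => g (x, 1)) lam|} : Set ℤ)
      = ({0, 2 ^ (m / 2)} : Set ℤ) := by
 classical
  set A := walsh1 (m - 1) (fun x => g (x, 0)) lam with hA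
  set B := walsh1 (m - 1) (fun x => g (x, 1)) lam with hB
  have h0 := hg lam 0
  have h1 := hg lam 1
  rw [walsh_eq] at h0 h1
  have c0 : chi 0 = 1 := rfl
  have c1 : chi 1 = -1 := rfl
  rw [c0] at h0; rw [c1] at h1
  rw [← hA, ← hB] at h0 h1
  have hpos : (0:ℤ) < 2 ^ (m / 2) := by positivity
  rcases h0 with h0 | h0 <;> rcases h1 with h1 | h1
  · have hA' : A = 2 ^ (m / 2) := by linarith
    have hB' : B = 0 := by linarith
    rw [hA', hB', abs_of_pos hpos, abs_zero, Set.pair_comm]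
  · have hA' : A = 0 := by linarith
    have hB' : B = 2 ^ (m / 2) := by linarith
    rw [hA', hB', abs_of_pos hpos, abs_zero]
  · have hA' : A = 0 := by linarith
    have hB' : B = -(2 ^ (m / 2)) := by linarith
    rw [hA', hB', abs_neg, abs_of_pos hpos, abs_zero]
  · have hA' : A = -(2 ^ (m / 2)) := by linarith
    have hB' : B = 0 := by linarith
    rw [hA', hB', abs_neg, abs_of_pos hpos, abs_zero, Set.pair_comm]
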